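/- Let μ > 0 and K > 0. There exists a constant C > 0 (depending only on μ, K, and the constants C₁⁰, C₂⁰) such that the following holds: for any 0 ≤ s ≤ t, any ε ∈ (0,K], any r ∈ (0,1), and any measurable function g : [s,t] → ℝ with |g(τ)| ≤ ε·e^{−μτ} for all τ ∈ [s,t], the point T := F_*^{-1}(F_*(r) + ∫_s^t g(τ)dτ) satisfies |T − r| ≤ C·ε·(e^{−μs} − e^{−μt})·r(1−r). -/

import Mathlib

open Real MeasureTheory Set

/-! With `logit x = log x - log (1 - x)`, whose derivative is `1 / (x (1 - x))`, the two-sided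
bound on `u_*` gives `|logit a - logit b| ≤ C₁⁰ |F_* a - F_* b|`. The integral of `g` is at most
`ε (e^{-μs} - e^{-μt}) / μ ≤ K / μ` in absolute value, so the logits of `T` and `r` differ by at
most that times `C₁⁰`, and in particular by at most `M = C₁⁰ K / μ`. By the mean value theorem
`T - r = (logit T - logit r) ξ (1 - ξ)` for some `ξ` between `T` and `r`, and two points whose
logits differ by at most `M` have values of `x (1 - x)` within a factor `e^M` of each other;
hence `C = e^M C₁⁰ / μ` works. -/

noncomputable def logit (x : ℝ) : ℝ := log x - log (1 - x)

lemma hasDerivAt_logit {x : ℝ} (hx : x ∈ Ioo (0 : ℝ) 1) :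
    HasDerivAt logit (x * (1 - x))⁻¹ x := by
  have h1x : 1 - x ≠ 0 := by linarith [hx.2]
  have hx0 : x ≠ 0 := hx.1.ne'
  have h := (hasDerivAt_log hx0).sub ((hasDerivAt_log h1x).comp x
    ((hasDerivAt_id x).const_sub 1))
  rwa [show x⁻¹ - (1 - x)⁻¹ * -1 = (x * (1 - x))⁻¹ by field_simp; ring] at h

lemma logit_monotoneOn : MonotoneOn logit (Ioo 0 1) := fun a ha b hb hab => by
  have := log_le_log ha.1 hab
  have := log_le_log (by linarith [hb.2]) (by linarith : 1 - b ≤ 1 - a)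
  unfold logit
  linarith

lemma intervalIntegrable_inv_mul_one_sub {a b : ℝ} (ha : a ∈ Ioo (0 : ℝ) 1)
    (hb : b ∈ Ioo (0 : ℝ) 1) : IntervalIntegrable (fun η => (η * (1 - η))⁻¹) volume a b := by
  have hsub : uIcc a b ⊆ Ioo 0 1 := ordConnected_Ioo.uIcc_subset ha hb
  refine ContinuousOn.intervalIntegrable (ContinuousOn.inv₀ (by fun_prop) fun x hx => ?_)
  have := hsub hx
  exact (mul_pos this.1 (by linarith [this.2])).ne'

lemma integral_inv_mul_one_sub {a b : ℝ} (ha : a ∈ Ioo (0 : ℝ) 1) (hb : b ∈ Ioo (0 : ℝ) 1) :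
    ∫ η in a..b, (η * (1 - η))⁻¹ = logit b - logit a :=
  intervalIntegral.integral_eq_sub_of_hasDerivAt
    (fun _ hx => hasDerivAt_logit (ordConnected_Ioo.uIcc_subset ha hb hx))
    (intervalIntegrable_inv_mul_one_sub ha hb)

lemma exists_mem_uIcc_sub_eq_logit_sub_mul {x y : ℝ} (hx : x ∈ Ioo (0 : ℝ) 1)
    (hy : y ∈ Ioo (0 : ℝ) 1) :
    ∃ ξ ∈ uIcc x y, x - y = (logit x - logit y) * (ξ * (1 - ξ)) := by
  wlog hyx : y ≤ x generalizing x y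
  · obtain ⟨ξ, hξ, h⟩ := this hy hx (le_of_not_ge hyx)
    exact ⟨ξ, uIcc_comm x y ▸ hξ, by linarith⟩
  rcases hyx.eq_or_lt with rfl | hlt
  · exact ⟨y, left_mem_uIcc, by ring⟩
  have hsub : Icc y x ⊆ Ioo 0 1 := Icc_subset_Ioo hy.1 hx.2
  obtain ⟨ξ, hξ, h⟩ := exists_hasDerivAt_eq_slope logit (fun ξ => (ξ * (1 - ξ))⁻¹) hlt
    (fun z hz => (hasDerivAt_logit (hsub hz)).continuousAt.continuousWithinAt)
    (fun z hz => hasDerivAt_logit (hsub (Ioo_subset_Icc_self hz)))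
  have hρ : 0 < ξ * (1 - ξ) := by
    have := hsub (Ioo_subset_Icc_self hξ)
    exact mul_pos this.1 (by linarith [this.2])
  refine ⟨ξ, uIcc_of_ge hyx ▸ Ioo_subset_Icc_self hξ, ?_⟩
  rw [eq_div_iff (sub_pos.2 hlt).ne'] at h
  rw [← h, mul_right_comm, inv_mul_cancel₀ hρ.ne', one_mul]

lemma mul_one_sub_le_mul_mul_one_sub_of_cross {x y E : ℝ} (hx : x ∈ Ioo (0 : ℝ) 1)
    (hy : y ∈ Ioo (0 : ℝ) 1) (hE : 1 ≤ E) (hxy : x * (1 - y) ≤ E * (y * (1 - x)))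
    (hyx : y * (1 - x) ≤ E * (x * (1 - y))) :
    x * (1 - x) ≤ E * (y * (1 - y)) := by
  have h1x : 0 < 1 - x := by linarith [hx.2]
  have h1y : 0 < 1 - y := by linarith [hy.2]
  have hAB : 0 ≤ x * (1 - y) * (y * (1 - x)) := (mul_pos (mul_pos hx.1 h1y) (mul_pos hy.1 h1x)).le
  -- expand `x (1 - x) ((1 - y) + y) ^ 2` and `y (1 - y) ((1 - x) + x) ^ 2` and compare termwise
  calc x * (1 - x) = x * (1 - y) * ((1 - x) * (1 - y)) + 2 * (x * (1 - y) * (y * (1 - x)))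
        + y * (1 - x) * (x * y) := by ring
    _ ≤ E * (y * (1 - x)) * ((1 - x) * (1 - y)) + 2 * (E * (x * (1 - y) * (y * (1 - x))))
        + E * (x * (1 - y)) * (x * y) := by
      gcongr ?_ * _ + 2 * ?_ + ?_ * _
      · exact le_mul_of_one_le_left hAB hE
      · exact (mul_pos hx.1 hy.1).le
    _ = E * (y * (1 - y)) := by ring

lemma le_exp_mul_of_log_sub_log_le {A B M : ℝ} (hA : 0 < A) (hB : 0 < B)
    (h : log A - log B ≤ M) : A ≤ exp M * B := by
  rw [← div_le_iff₀ hB, ← log_le_iff_le_exp (div_pos hA hB), log_div hA.ne' hB.ne']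
  exact h

lemma mul_one_sub_le_exp_mul_of_abs_logit_sub_le {x y M : ℝ} (hx : x ∈ Ioo (0 : ℝ) 1)
    (hy : y ∈ Ioo (0 : ℝ) 1) (hM : |logit x - logit y| ≤ M) :
    x * (1 - x) ≤ exp M * (y * (1 - y)) := by
  have h1x : 0 < 1 - x := by linarith [hx.2]
  have h1y : 0 < 1 - y := by linarith [hy.2]
  have hlog : logit x - logit y = log (x * (1 - y)) - log (y * (1 - x)) := by
    rw [logit, logit, log_mul hx.1.ne' h1y.ne', log_mul hy.1.ne' h1x.ne']
    ring
  have hM' := abs_le.1 hM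
  refine mul_one_sub_le_mul_mul_one_sub_of_cross hx hy (one_le_exp ((abs_nonneg _).trans hM))
    (le_exp_mul_of_log_sub_log_le (mul_pos hx.1 h1y) (mul_pos hy.1 h1x) (by linarith))
    (le_exp_mul_of_log_sub_log_le (mul_pos hy.1 h1x) (mul_pos hx.1 h1y) (by linarith))

lemma abs_sub_le_abs_logit_sub_mul {x y M : ℝ} (hx : x ∈ Ioo (0 : ℝ) 1) (hy : y ∈ Ioo (0 : ℝ) 1)
    (hM : |logit x - logit y| ≤ M) :
    |x - y| ≤ |logit x - logit y| * (exp M * (y * (1 - y))) := by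
  obtain ⟨ξ, hξ, h⟩ := exists_mem_uIcc_sub_eq_logit_sub_mul hx hy
  have hsub : uIcc y x ⊆ Ioo 0 1 := ordConnected_Ioo.uIcc_subset hy hx
  rw [uIcc_comm] at hξ
  have hξ' := hsub hξ
  have hlogit : |logit ξ - logit y| ≤ |logit x - logit y| :=
    abs_sub_left_of_mem_uIcc ((logit_monotoneOn.mono hsub).mapsTo_uIcc hξ)
  rw [h, abs_mul, abs_of_pos (mul_pos hξ'.1 (by linarith [hξ'.2]) : 0 < ξ * (1 - ξ))]
  exact mul_le_mul_of_nonneg_left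
    (mul_one_sub_le_exp_mul_of_abs_logit_sub_le hξ' hy (hlogit.trans hM)) (abs_nonneg _)

lemma integral_exp_neg_mul {μ s t : ℝ} (hμ : μ ≠ 0) :
    ∫ τ in s..t, exp (-μ * τ) = (exp (-μ * s) - exp (-μ * t)) / μ := by
  rw [intervalIntegral.integral_comp_mul_left (fun τ => exp τ) (neg_ne_zero.2 hμ), integral_exp]
  simp only [smul_eq_mul]
  field_simp
  ring

lemma abs_intervalIntegral_le_of_abs_le_mul_exp {g : ℝ → ℝ} {s t ε μ : ℝ} (hst : s ≤ t)
    (hμ : μ ≠ 0) (hg : ∀ τ ∈ Icc s t, |g τ| ≤ ε * exp (-μ * τ)) :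
    |∫ τ in s..t, g τ| ≤ ε * ((exp (-μ * s) - exp (-μ * t)) / μ) := by
  rw [← integral_exp_neg_mul hμ, ← intervalIntegral.integral_const_mul]
  exact intervalIntegral.norm_integral_le_of_norm_le hst
    (ae_of_all _ fun τ hτ => (norm_eq_abs (g τ)).trans_le (hg τ (Ioc_subset_Icc_self hτ)))
    ((by fun_prop : Continuous fun τ => ε * exp (-μ * τ)).intervalIntegrable _ _)

section

variable {u : ℝ → ℝ}

lemma intervalIntegrable_one_div_abs (hu : ContinuousOn u (Ioo 0 1))
    (hu0 : ∀ η ∈ Ioo (0 : ℝ) 1, u η ≠ 0) {a b : ℝ} (ha : a ∈ Ioo (0 : ℝ) 1)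
    (hb : b ∈ Ioo (0 : ℝ) 1) :
    IntervalIntegrable (fun η => 1 / |u η|) volume a b := by
  have hsub : uIcc a b ⊆ Ioo 0 1 := ordConnected_Ioo.uIcc_subset ha hb
  exact ContinuousOn.intervalIntegrable <| continuousOn_const.div (hu.mono hsub).abs
    fun η hη => abs_ne_zero.2 (hu0 η (hsub hη))

lemma abs_logit_sub_le_mul_abs_integral {C : ℝ} (hu : ContinuousOn u (Ioo 0 1))
    (hneg : ∀ η ∈ Ioo (0 : ℝ) 1, u η < 0)
    (hlb : ∀ η ∈ Ioo (0 : ℝ) 1, -C * (η * (1 - η)) ≤ u η) {x y : ℝ}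
    (hx : x ∈ Ioo (0 : ℝ) 1) (hy : y ∈ Ioo (0 : ℝ) 1) :
    |logit x - logit y| ≤ C * |(∫ η in y..x, 1 / |u η|)| := by
  wlog hyx : y ≤ x generalizing x y
  · rw [abs_sub_comm, intervalIntegral.integral_symm, abs_neg]
    exact this hy hx (le_of_not_ge hyx)
  have hsub : Icc y x ⊆ Ioo 0 1 := Icc_subset_Ioo hy.1 hx.2
  have hint := intervalIntegrable_one_div_abs hu (fun η hη => (hneg η hη).ne) hy hx
  rw [abs_of_nonneg (sub_nonneg.2 (logit_monotoneOn hy hx hyx)),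
    abs_of_nonneg (intervalIntegral.integral_nonneg hyx fun η _ => by positivity),
    ← integral_inv_mul_one_sub hy hx, ← intervalIntegral.integral_const_mul]
  refine intervalIntegral.integral_mono_on hyx ?_ (hint.const_mul C) fun η hη => ?_
  · exact intervalIntegrable_inv_mul_one_sub hy hx
  · have hη' := hsub hη
    have hρ : 0 < η * (1 - η) := mul_pos hη'.1 (by linarith [hη'.2])
    rw [mul_one_div, le_div_iff₀ (abs_pos.2 (hneg η hη').ne), inv_mul_le_iff₀ hρ,
      abs_of_neg (hneg η hη')]
    linarith [hlb η hη']

lemma abs_logit_sub_le_mul_abs_sub {F : ℝ → ℝ} {C : ℝ} (hu : ContinuousOn u (Ioo 0 1))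
    (hneg : ∀ η ∈ Ioo (0 : ℝ) 1, u η < 0)
    (hlb : ∀ η ∈ Ioo (0 : ℝ) 1, -C * (η * (1 - η)) ≤ u η)
    (hF : ∀ r ∈ Ioo (0 : ℝ) 1, F r = ∫ η in (1 / 2 : ℝ)..r, 1 / |u η|) {x y : ℝ}
    (hx : x ∈ Ioo (0 : ℝ) 1) (hy : y ∈ Ioo (0 : ℝ) 1) :
    |logit x - logit y| ≤ C * |F x - F y| := by
  have hhalf : (1 / 2 : ℝ) ∈ Ioo 0 1 := by norm_num
  have hu0 : ∀ η ∈ Ioo (0 : ℝ) 1, u η ≠ 0 := fun η hη => (hneg η hη).ne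
  rw [hF x hx, hF y hy, intervalIntegral.integral_interval_sub_left
    (intervalIntegrable_one_div_abs hu hu0 hhalf hx)
    (intervalIntegrable_one_div_abs hu hu0 hhalf hy)]
  exact abs_logit_sub_le_mul_abs_integral hu hneg hlb hx hy

end

theorem stmt_5_general
    (u F Finv : ℝ → ℝ) (C10 C20 : ℝ)
    (hC10 : 0 < C10) (hC20 : 0 < C20)
    (hu : ContDiffOn ℝ 1 u (Set.Icc 0 1))
    (hu_lb : ∀ r ∈ Set.Icc (0:ℝ) 1, -C10 * (r * (1 - r)) ≤ u r)
    (hu_ub : ∀ r ∈ Set.Icc (0:ℝ) 1, u r ≤ -C20 * (r * (1 - r)))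
    (hF : ∀ r ∈ Set.Ioo (0:ℝ) 1, F r = ∫ η in (1/2 : ℝ)..r, 1 / |u η|)
    (hFinv_mem : ∀ x : ℝ, Finv x ∈ Set.Ioo (0:ℝ) 1)
    (hFinv_right : ∀ x : ℝ, F (Finv x) = x)
    (μ K : ℝ) (hμ : 0 < μ) :
    ∃ C : ℝ, 0 < C ∧
      ∀ s t : ℝ, 0 ≤ s → s ≤ t →
      ∀ ε : ℝ, ε ∈ Set.Ioc 0 K →
      ∀ r ∈ Set.Ioo (0:ℝ) 1,
      ∀ g : ℝ → ℝ, Measurable g →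
        (∀ τ ∈ Set.Icc s t, |g τ| ≤ ε * Real.exp (-μ * τ)) →
        |Finv (F r + ∫ τ in s..t, g τ) - r| ≤
          C * ε * (Real.exp (-μ * s) - Real.exp (-μ * t)) * (r * (1 - r)) := by
  set M := C10 * K / μ
  refine ⟨exp M * C10 / μ, by positivity, fun s t hs hst ε hε r hr g _ hg => ?_⟩
  set D := exp (-μ * s) - exp (-μ * t)
  set T := Finv (F r + ∫ τ in s..t, g τ)
  have hneg : ∀ η ∈ Ioo (0 : ℝ) 1, u η < 0 := fun η hη => by
    have := hu_ub η (Ioo_subset_Icc_self hη)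
    have : 0 < η * (1 - η) := mul_pos hη.1 (by linarith [hη.2])
    nlinarith
  have hD : ε * D ≤ K := by
    have : D ≤ 1 := by
      have := exp_le_one_iff.2 (by nlinarith : -μ * s ≤ 0)
      linarith [exp_pos (-μ * t)]
    nlinarith [hε.1, hε.2]
  have hlogit : |logit T - logit r| ≤ C10 * (ε * (D / μ)) := by
    calc |logit T - logit r| ≤ C10 * |F T - F r| :=
          abs_logit_sub_le_mul_abs_sub (hu.continuousOn.mono Ioo_subset_Icc_self) hneg
            (fun η hη => hu_lb η (Ioo_subset_Icc_self hη)) hF (hFinv_mem _) hr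
      _ ≤ C10 * (ε * (D / μ)) := by
          rw [hFinv_right, add_sub_cancel_left]
          exact mul_le_mul_of_nonneg_left
            (abs_intervalIntegral_le_of_abs_le_mul_exp hst hμ.ne' hg) hC10.le
  have hM : C10 * (ε * (D / μ)) ≤ M := by
    rw [show C10 * (ε * (D / μ)) = C10 * (ε * D) / μ by ring]
    exact div_le_div_of_nonneg_right (mul_le_mul_of_nonneg_left hD hC10.le) hμ.le
  calc |T - r| ≤ |logit T - logit r| * (exp M * (r * (1 - r))) :=
        abs_sub_le_abs_logit_sub_mul (hFinv_mem _) hr (hlogit.trans hM)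
    _ ≤ C10 * (ε * (D / μ)) * (exp M * (r * (1 - r))) :=
        mul_le_mul_of_nonneg_right hlogit (by have := mul_pos hr.1 (sub_pos.2 hr.2); positivity)
    _ = exp M * C10 / μ * ε * D * (r * (1 - r)) := by ring

theorem stmt_5
    (u F Finv : ℝ → ℝ) (C10 C20 : ℝ)
    (hC10 : 0 < C10) (hC20 : 0 < C20)
    (hu : ContDiffOn ℝ 1 u (Set.Icc 0 1))
    (hu_lb : ∀ r ∈ Set.Icc (0:ℝ) 1, -C10 * (r * (1 - r)) ≤ u r)
    (hu_ub : ∀ r ∈ Set.Icc (0:ℝ) 1, u r ≤ -C20 * (r * (1 - r)))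
    (hF : ∀ r ∈ Set.Ioo (0:ℝ) 1, F r = ∫ η in (1/2 : ℝ)..r, 1 / |u η|)
    (hF_mono : StrictMonoOn F (Set.Ioo 0 1))
    (hFinv_mem : ∀ x : ℝ, Finv x ∈ Set.Ioo (0:ℝ) 1)
    (hFinv_right : ∀ x : ℝ, F (Finv x) = x)
    (hFinv_left : ∀ r ∈ Set.Ioo (0:ℝ) 1, Finv (F r) = r)
    (μ K : ℝ) (hμ : 0 < μ) (hK : 0 < K) :
    ∃ C : ℝ, 0 < C ∧
      ∀ s t : ℝ, 0 ≤ s → s ≤ t →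
      ∀ ε : ℝ, ε ∈ Set.Ioc 0 K →
      ∀ r ∈ Set.Ioo (0:ℝ) 1,
      ∀ g : ℝ → ℝ, Measurable g →
        (∀ τ ∈ Set.Icc s t, |g τ| ≤ ε * Real.exp (-μ * τ)) →
        |Finv (F r + ∫ τ in s..t, g τ) - r| ≤
          C * ε * (Real.exp (-μ * s) - Real.exp (-μ * t)) * (r * (1 - r)) :=
  stmt_5_general u F Finv C10 C20 hC10 hC20 hu hu_lb hu_ub hF hFinv_mem hFinv_right μ K hμ
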